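/- arXiv:2311.08911 — 2 statements merged into one kernel-verified Lean document; each statement's English description precedes it below -/
import Mathlib

section
/- Consider n ≥ 1 nodes labelled 1,…,n on a line starting at a source s, with nonnegative real edge costs c_1,…,c_n, where c_1 is the cost of the edge from s to node 1 and, for 2 ≤ j ≤ n, c_j is the cost of the edge from node j−1 to node j. Define the characteristic function v on subsets of {1,…,n} by v(∅) = 0 and v(S) = Σ_{j=1}^{max S} c_j for nonempty S (the cost of the path from s to the farthest node of S). Then for every i ∈ {1,…,n}, the Shapley value of node i equals φ_i = Σ_{j=1}^{i} c_j/(n − j + 1). Equivalently, the Shapley cost share of node i coincides with the Claus–Kleitman rule in which the cost of each edge on the line is shared equally among all nodes that use it to connect to the source. -/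
/-!
The line game is the combination `v = Σ_j c_j u_j` of the edge games
`u_j(S) = [S contains a node at or beyond j]`, and the Shapley value is linear, so it
suffices to compute `φ_i(u_j)`. Node `i` changes `u_j` only when `j ≤ i` and every member
of `S` lies before `j`, so `φ_i(u_j)` is the total Shapley weight of the subsets of
`{1,…,j-1}`, which the hockey-stick identity evaluates to `1/(n-j+1)`.
-/

open Finset

/-- The Shapley value of player `i` in the game `(N, v)`:
`φ_i(N,v) = Σ_{S ⊆ N\{i}} [|S|!·(|N|−|S|−1)!/|N|!]·(v(S∪{i}) − v(S))`. -/
noncomputable def shapley {α : Type*} [DecidableEq α]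
    (N : Finset α) (v : Finset α → ℝ) (i : α) : ℝ :=
  ∑ S ∈ (N.erase i).powerset,
    ((S.card.factorial * (N.card - S.card - 1).factorial : ℝ) / (N.card.factorial : ℝ))
      * (v (insert i S) - v S)

/-- The characteristic function of the line (path) graph: `v(∅) = 0` and, for a
nonempty coalition `S ⊆ {1,…,n}`, `v(S) = Σ_{j=1}^{max S} c_j`, the cost of the
path from the source to the farthest node of `S`. -/
noncomputable def lineGame (c : ℕ → ℝ) (S : Finset ℕ) : ℝ :=
  if h : S.Nonempty then ∑ j ∈ Finset.Icc 1 (S.max' h), c j else 0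

open Nat

namespace Nat

theorem choose_mul_factorial_mul_factorial_add_sub {M k : ℕ} (u : ℕ) (hk : k ≤ M) :
    M.choose k * k ! * (M + u - k)! = M ! * u ! * (M - k + u).choose u := by
  rw [show M + u - k = M - k + u by omega, ← add_choose_mul_factorial_mul_factorial,
    ← choose_mul_factorial_mul_factorial hk]
  ring

theorem add_one_mul_sum_choose_mul_factorial_mul_factorial (M u : ℕ) :
    (u + 1) * ∑ k ∈ range (M + 1), M.choose k * k ! * (M + u - k)! = (M + u + 1)! := by
  calc (u + 1) * ∑ k ∈ range (M + 1), M.choose k * k ! * (M + u - k)!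
      = (u + 1) * ∑ k ∈ range (M + 1), M ! * u ! * (M - k + u).choose u := by
        congr 1
        exact sum_congr rfl fun k hk =>
          choose_mul_factorial_mul_factorial_add_sub u (le_of_lt_succ (mem_range.1 hk))
    _ = (u + 1) * (M ! * u ! * ∑ l ∈ range (M + 1), (l + u).choose u) := by
        rw [← mul_sum, ← sum_range_reflect (fun l => (l + u).choose u), add_tsub_cancel_right]
    _ = (M + u + 1).choose (u + 1) * M ! * (u + 1)! := by
        rw [sum_range_add_choose, factorial_succ]
        ring
    _ = (M + u + 1)! := add_choose_mul_factorial_mul_factorial M (u + 1)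

end Nat

namespace Finset

theorem powerset_filter {α : Type*} (s : Finset α) (p : α → Prop) [DecidablePred p] :
    (s.filter p).powerset = s.powerset.filter fun t => ∀ a ∈ t, p a := by
  ext t
  simp only [mem_powerset, mem_filter, subset_iff]
  exact ⟨fun h => ⟨fun a ha => (h ha).1, fun a ha => (h ha).2⟩,
    fun h a ha => ⟨h.1 ha, h.2 a ha⟩⟩

end Finset

noncomputable def shapleyWeight (n k : ℕ) : ℝ :=
  (k ! * (n - k - 1)! : ℝ) / n !

theorem sum_powerset_shapleyWeight {α : Type*} (A : Finset α) {n : ℕ} (hA : #A < n) :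
    ∑ S ∈ A.powerset, shapleyWeight n #S = 1 / ((n - #A : ℕ) : ℝ) := by
  obtain ⟨u, rfl⟩ : ∃ u, n = #A + u + 1 := ⟨n - #A - 1, by omega⟩
  have key := Nat.add_one_mul_sum_choose_mul_factorial_mul_factorial #A u
  rw [sum_powerset_apply_card, show #A + u + 1 - #A = u + 1 by omega]
  simp only [shapleyWeight, nsmul_eq_mul, ← mul_div_assoc,
    show ∀ k, #A + u + 1 - k - 1 = #A + u - k by omega]
  rw [← sum_div, div_eq_div_iff (by positivity) (by positivity), one_mul, ← key]
  push_cast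
  rw [mul_comm]
  simp only [mul_assoc]

section Shapley

variable {α : Type*} [DecidableEq α]

theorem shapley_eq_sum_shapleyWeight (N : Finset α) (v : Finset α → ℝ) (i : α) :
    shapley N v i = ∑ S ∈ (N.erase i).powerset, shapleyWeight #N #S * (v (insert i S) - v S) :=
  rfl

theorem shapley_congr {N : Finset α} {v w : Finset α → ℝ} {i : α} (hi : i ∈ N)
    (h : ∀ S ⊆ N, v S = w S) : shapley N v i = shapley N w i := by
  refine sum_congr rfl fun S hS => ?_
  have hSN : S ⊆ N := (mem_powerset.1 hS).trans (erase_subset i N)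
  rw [h S hSN, h _ (insert_subset hi hSN)]

theorem shapley_sum_mul {ι : Type*} (N : Finset α) (J : Finset ι) (c : ι → ℝ)
    (f : ι → Finset α → ℝ) (i : α) :
    shapley N (fun S => ∑ j ∈ J, c j * f j S) i = ∑ j ∈ J, c j * shapley N (f j) i := by
  simp only [shapley, ← sum_sub_distrib, ← mul_sub, mul_sum]
  rw [sum_comm]
  exact sum_congr rfl fun j _ => sum_congr rfl fun S _ => by ring

end Shapley

noncomputable def edgeGame (j : ℕ) (S : Finset ℕ) : ℝ :=
  if ∃ s ∈ S, j ≤ s then 1 else 0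

theorem lineGame_eq_sum_edgeGame (c : ℕ → ℝ) {K : ℕ} {S : Finset ℕ} (hS : ∀ s ∈ S, s ≤ K) :
    lineGame c S = ∑ j ∈ Icc 1 K, c j * edgeGame j S := by
  simp only [edgeGame, mul_ite, mul_one, mul_zero, ← sum_filter]
  rcases S.eq_empty_or_nonempty with rfl | hne
  · simp [lineGame]
  · rw [lineGame, dif_pos hne]
    congr 1
    ext j
    have hjS : (∃ s ∈ S, j ≤ s) ↔ j ≤ S.max' hne :=
      ⟨fun ⟨s, hs, hjs⟩ => hjs.trans (S.le_max' s hs), fun h => ⟨_, S.max'_mem hne, h⟩⟩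
    simp only [mem_Icc, mem_filter, hjS]
    have := hS _ (S.max'_mem hne)
    omega

theorem edgeGame_insert_sub (j i : ℕ) (S : Finset ℕ) :
    edgeGame j (insert i S) - edgeGame j S = if j ≤ i ∧ ∀ s ∈ S, s < j then 1 else 0 := by
  simp only [edgeGame, exists_mem_insert]
  by_cases hi : j ≤ i <;> by_cases hS : ∃ s ∈ S, j ≤ s <;> simp [hi, hS]

theorem shapley_edgeGame {n i j : ℕ} (hi : i ∈ Icc 1 n) (hj : 1 ≤ j) :
    shapley (Icc 1 n) (edgeGame j) i = if j ≤ i then 1 / ((n : ℝ) - j + 1) else 0 := by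
  simp only [shapley_eq_sum_shapleyWeight, edgeGame_insert_sub, mul_ite, mul_one, mul_zero]
  split_ifs with hji
  · simp only [hji, true_and, ← sum_filter]
    have hin := mem_Icc.1 hi
    have hfilter : ((Icc 1 n).erase i).filter (· < j) = Ico 1 j := by
      ext s
      simp only [mem_filter, mem_erase, mem_Icc, mem_Ico]
      omega
    have hcard : #(Ico 1 j) < #(Icc 1 n) := by rw [Nat.card_Ico, Nat.card_Icc]; omega
    rw [← powerset_filter, hfilter, sum_powerset_shapleyWeight _ hcard, Nat.card_Icc,
      Nat.card_Ico, show n + 1 - 1 - (j - 1) = n - j + 1 by omega,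
      Nat.cast_add, Nat.cast_sub (by omega), Nat.cast_one]
  · simp [hji]

theorem shapley_line_eq_clausKleitman_general (n : ℕ) (c : ℕ → ℝ) :
    ∀ i ∈ Finset.Icc 1 n,
      shapley (Finset.Icc 1 n) (lineGame c) i
        = ∑ j ∈ Finset.Icc 1 i, c j / ((n : ℝ) - (j : ℝ) + 1) := by
  intro i hi
  calc shapley (Icc 1 n) (lineGame c) i
      = shapley (Icc 1 n) (fun S => ∑ j ∈ Icc 1 n, c j * edgeGame j S) i :=
        shapley_congr hi fun S hS =>
          lineGame_eq_sum_edgeGame c fun s hs => (mem_Icc.1 (hS hs)).2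
    _ = ∑ j ∈ Icc 1 n, c j * shapley (Icc 1 n) (edgeGame j) i := shapley_sum_mul ..
    _ = ∑ j ∈ Icc 1 n, if j ≤ i then c j / ((n : ℝ) - j + 1) else 0 :=
        sum_congr rfl fun j hj => by
          rw [shapley_edgeGame hi (mem_Icc.1 hj).1, mul_ite, mul_zero, mul_one_div]
    _ = ∑ j ∈ Icc 1 i, c j / ((n : ℝ) - j + 1) := by
        rw [← sum_filter]
        congr 1
        ext j
        simp only [mem_filter, mem_Icc]
        have := (mem_Icc.1 hi).2
        omega

/-- On a line of `n` nodes with nonnegative edge costs `c_1,…,c_n` (node `j`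
joined to node `j−1`, node `1` joined to the source), the Shapley value of
node `i` equals `Σ_{j=1}^{i} c_j/(n − j + 1)`, i.e. it coincides with the
Claus–Kleitman rule where each edge cost is shared equally among the nodes
using that edge to connect to the source. -/
theorem shapley_line_eq_clausKleitman (n : ℕ) (hn : 1 ≤ n) (c : ℕ → ℝ)
    (hc : ∀ j ∈ Finset.Icc 1 n, 0 ≤ c j) :
    ∀ i ∈ Finset.Icc 1 n,
      shapley (Finset.Icc 1 n) (lineGame c) i
        = ∑ j ∈ Finset.Icc 1 i, c j / ((n : ℝ) - (j : ℝ) + 1) :=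
  shapley_line_eq_clausKleitman_general n c
end

section
/- Let V be a finite set of nodes with source s ∈ V, let w assign a nonnegative real cost to each edge (unordered pair of distinct nodes of V), let i ∈ V \ {s}, and let E' ⊆ E be two finite edge sets such that every edge of E \ E' is incident to i and the whole set V \ {s} is connectable within E'. Let N = V \ {s}, and let v_E and v_{E'} be the connection games given by v(∅)=0 and v(S) = C(S) for nonempty S, computed with edge sets E and E' respectively. Then φ_i(N, v_E) ≤ φ_i(N, v_{E'}): node i's Shapley cost share when all of its adjacent edges are available is at most its cost share after it cuts some of its adjacent edges (truthfulness of the average marginal cost mechanism). -/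
open Finset

/-- The edge set `F` connects every node of `S` to the source `src`:
in the graph with edge set `F`, every node of `S` is reachable from `src`. -/
def Connects {α : Type*} (src : α) (F : Finset (Sym2 α)) (S : Finset α) : Prop :=
  ∀ i ∈ S, (SimpleGraph.fromEdgeSet (↑F : Set (Sym2 α))).Reachable src i

/-- `S` is connectable within the available edge set `E`: some `F ⊆ E`
connects every node of `S` to the source. -/
def Connectable {α : Type*} (src : α) (E : Finset (Sym2 α)) (S : Finset α) : Prop :=
  ∃ F ⊆ E, Connects src F S

/-- The minimum cost `C_E(S)` of connecting `S` to the source `src` using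
edges from `E` with edge costs `w`. -/
noncomputable def connCost {α : Type*} (src : α) (w : Sym2 α → ℝ)
    (E : Finset (Sym2 α)) (S : Finset α) : ℝ :=
  sInf {x : ℝ | ∃ F ⊆ E, Connects src F S ∧ x = ∑ e ∈ F, w e}
/-- The connection game induced by edge set `E` with costs `w`:
`v(∅) = 0` and `v(S) = C_E(S)` for nonempty `S`. -/
noncomputable def connGame {α : Type*} [DecidableEq α] (src : α) (w : Sym2 α → ℝ)
    (E : Finset (Sym2 α)) (S : Finset α) : ℝ :=
  if S = ∅ then 0 else connCost src w E S

/-!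
The Shapley value averages marginal costs with nonnegative weights, so it suffices that for
every coalition `S ∌ i` the marginal cost of `i` under `E` is at most the one under `E'`.
Take an optimal `F ⊆ E` connecting `S`. If `i` is reachable from the source in `F`, the
marginal cost of `i` under `E` is `≤ 0`, whereas marginal costs are always `≥ 0`. Otherwise no
path of `F` from the source meets `i`, so none uses a deleted edge: `F ∩ E'` still connects
`S`, whence `C_{E'}(S) = C_E(S)`, while `C_E(S ∪ {i}) ≤ C_{E'}(S ∪ {i})` holds anyway.
-/

open SimpleGraph

theorem SimpleGraph.Reachable.fromEdgeSet_inter {α : Type*} {F D : Set (Sym2 α)} {u v x : α}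
    (h : (fromEdgeSet F).Reachable u v) (hx : ¬ (fromEdgeSet F).Reachable u x)
    (hD : ∀ e ∈ F \ D, x ∈ e) : (fromEdgeSet (F ∩ D)).Reachable u v := by
  classical
  obtain ⟨p⟩ := h
  refine ⟨p.transfer _ fun e he => ?_⟩
  have heF : e ∈ F \ Sym2.diagSet := edgeSet_fromEdgeSet F ▸ p.edges_subset_edgeSet he
  rw [edgeSet_fromEdgeSet]
  refine ⟨⟨heF.1, ?_⟩, heF.2⟩
  by_contra heD
  have hxp : x ∈ p.support := p.mem_support_of_mem_edges he (hD e ⟨heF.1, heD⟩)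
  exact hx (p.takeUntil x hxp).reachable

section ConnectionCost

variable {α : Type*} {src : α} {w : Sym2 α → ℝ} {E E' F : Finset (Sym2 α)} {S T : Finset α}

theorem Connectable.mono (h : Connectable src E T) (hE : E ⊆ E') (hS : S ⊆ T) :
    Connectable src E' S :=
  let ⟨F, hFE, hF⟩ := h
  ⟨F, hFE.trans hE, fun j hj => hF j (hS hj)⟩

theorem finite_connCost_set :
    {x : ℝ | ∃ F ⊆ E, Connects src F S ∧ x = ∑ e ∈ F, w e}.Finite := by
  classical
  refine (E.powerset.image fun F => ∑ e ∈ F, w e).finite_toSet.subset ?_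
  rintro x ⟨F, hFE, -, rfl⟩
  exact mem_image_of_mem _ (mem_powerset.mpr hFE)

theorem connCost_le (hFE : F ⊆ E) (hF : Connects src F S) :
    connCost src w E S ≤ ∑ e ∈ F, w e :=
  csInf_le finite_connCost_set.bddBelow ⟨F, hFE, hF, rfl⟩

theorem exists_connCost_eq (h : Connectable src E S) :
    ∃ F ⊆ E, Connects src F S ∧ connCost src w E S = ∑ e ∈ F, w e :=
  let ⟨F, hFE, hF⟩ := h
  Set.Nonempty.csInf_mem (s := {x | ∃ F ⊆ E, Connects src F S ∧ x = ∑ e ∈ F, w e})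
    ⟨_, F, hFE, hF, rfl⟩ finite_connCost_set

theorem connCost_mono (hE : E' ⊆ E) (hST : S ⊆ T) (h : Connectable src E' T) :
    connCost src w E S ≤ connCost src w E' T := by
  obtain ⟨F, hFE, hF, hcost⟩ := exists_connCost_eq (w := w) h
  exact hcost ▸ connCost_le (hFE.trans hE) fun j hj => hF j (hST hj)

theorem connCost_empty (hw : ∀ e ∈ E, 0 ≤ w e) : connCost src w E ∅ = 0 := by
  have hconn : Connects src ∅ (∅ : Finset α) := by simp [Connects]
  refine le_antisymm (by simpa using connCost_le (w := w) (empty_subset E) hconn) ?_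
  refine le_csInf ⟨0, ∅, empty_subset E, hconn, by simp⟩ ?_
  rintro x ⟨F, hFE, -, rfl⟩
  exact sum_nonneg fun e he => hw e (hFE he)

theorem connGame_eq_connCost [DecidableEq α] (hw : ∀ e ∈ E, 0 ≤ w e) :
    connGame src w E S = connCost src w E S := by
  unfold connGame
  split_ifs with hS
  · rw [hS, connCost_empty hw]
  · rfl

theorem connCost_insert_sub_le [DecidableEq α] {i : α} (hE'E : E' ⊆ E)
    (hw : ∀ e ∈ E, 0 ≤ w e) (hinc : ∀ e ∈ E \ E', i ∈ e)
    (hconn : Connectable src E' (insert i S)) :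
    connCost src w E (insert i S) - connCost src w E S ≤
      connCost src w E' (insert i S) - connCost src w E' S := by
  obtain ⟨F, hFE, hF, hcost⟩ :=
    exists_connCost_eq (w := w) (hconn.mono hE'E (subset_insert i S))
  by_cases hi : (fromEdgeSet (F : Set (Sym2 α))).Reachable src i
  · have hFi : Connects src F (insert i S) := forall_mem_insert _ _ _ |>.mpr ⟨hi, hF⟩
    have hE : connCost src w E (insert i S) ≤ connCost src w E S :=
      hcost ▸ connCost_le hFE hFi
    have hE' : connCost src w E' S ≤ connCost src w E' (insert i S) :=
      connCost_mono subset_rfl (subset_insert i S) hconn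
    linarith
  · have hFE' : Connects src (F ∩ E') S := fun j hj => by
      rw [coe_inter]
      exact (hF j hj).fromEdgeSet_inter hi fun e ⟨heF, heE'⟩ =>
        hinc e (mem_sdiff.mpr ⟨hFE heF, heE'⟩)
    have hE' : connCost src w E' S ≤ connCost src w E S := calc
      connCost src w E' S ≤ ∑ e ∈ F ∩ E', w e := connCost_le inter_subset_right hFE'
      _ ≤ ∑ e ∈ F, w e :=
        sum_le_sum_of_subset_of_nonneg inter_subset_left fun e he _ => hw e (hFE he)
      _ = connCost src w E S := hcost.symm
    have hE : connCost src w E (insert i S) ≤ connCost src w E' (insert i S) :=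
      connCost_mono hE'E subset_rfl hconn
    linarith

end ConnectionCost

theorem shapley_le_shapley {α : Type*} [DecidableEq α] {N : Finset α} {v v' : Finset α → ℝ}
    {i : α} (h : ∀ S ⊆ N.erase i, v (insert i S) - v S ≤ v' (insert i S) - v' S) :
    shapley N v i ≤ shapley N v' i :=
  sum_le_sum fun S hS => mul_le_mul_of_nonneg_left (h S (mem_powerset.mp hS)) (by positivity)

theorem amcm_truthful_general (α : Type*) [DecidableEq α]
    (V : Finset α) (src : α)
    (E E' : Finset (Sym2 α)) (hE'E : E' ⊆ E)
    (w : Sym2 α → ℝ) (hw : ∀ e ∈ E, 0 ≤ w e)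
    (i : α) (hiV : i ∈ V \ {src})
    (hinc : ∀ e ∈ E \ E', i ∈ e)
    (hconn : Connectable src E' (V \ {src})) :
    shapley (V \ {src}) (connGame src w E) i ≤
      shapley (V \ {src}) (connGame src w E') i := by
  have hw' : ∀ e ∈ E', 0 ≤ w e := fun e he => hw e (hE'E he)
  refine shapley_le_shapley fun S hS => ?_
  have hiS : insert i S ⊆ V \ {src} := insert_subset hiV (hS.trans (erase_subset i _))
  simp only [connGame_eq_connCost hw, connGame_eq_connCost hw']
  exact connCost_insert_sub_le hE'E hw hinc (hconn.mono subset_rfl hiS)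

/-- Truthfulness of the average marginal cost mechanism: if node `i` cuts some
of its adjacent edges (shrinking the available edge set from `E` to `E' ⊆ E`,
where every deleted edge is incident to `i`) while all of `V \ {s}` remains
connectable within `E'`, then `i`'s Shapley cost share in the connection game
with edge set `E` is at most its share with edge set `E'`. -/
theorem amcm_truthful (α : Type*) [DecidableEq α]
    (V : Finset α) (src : α) (hsrc : src ∈ V)
    (E E' : Finset (Sym2 α)) (hE'E : E' ⊆ E)
    (hE : ∀ e ∈ E, ¬ e.IsDiag ∧ ∀ x ∈ e, x ∈ V)
    (w : Sym2 α → ℝ) (hw : ∀ e ∈ E, 0 ≤ w e)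
    (i : α) (hiV : i ∈ V \ {src})
    (hinc : ∀ e ∈ E \ E', i ∈ e)
    (hconn : Connectable src E' (V \ {src})) :
    shapley (V \ {src}) (connGame src w E) i ≤
      shapley (V \ {src}) (connGame src w E') i :=
  amcm_truthful_general α V src E E' hE'E w hw i hiV hinc hconn
end
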